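/- The elapsed-months window test and the end-of-window test for an 18-month window are not equivalent: for base = (2025, 3, 31) and event = (2026, 9, 30), both dates are valid, base ≤ event, the adjusted elapsed-month count e = 12·(2026 − 2025) + (9 − 3) − 1 = 17 (the subtraction of 1 applies because the day of event, 30, is less than the day of base, 31) satisfies e < 18, yet base +P (0, 18, 0) = (2026, 9, 30) = event, so event < base +P (0, 18, 0) is false. -/

import Mathlib

/-- A date is a triple of integers (year, month, day). -/
structure Date where
  y : ℤ
  m : ℤ
  d : ℤ

/-- A year is a leap year iff divisible by 4 and (not by 100, or by 400). -/
def isLeap (y : ℤ) : Prop :=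
  y % 4 = 0 ∧ (y % 100 ≠ 0 ∨ y % 400 = 0)

/-- Number of days in month `m` of year `y`. -/
def nbdays (y m : ℤ) : ℤ :=
  if m = 4 ∨ m = 6 ∨ m = 9 ∨ m = 11 then 30
  else if m = 2 then
    (if y % 4 = 0 ∧ (y % 100 ≠ 0 ∨ y % 400 = 0) then 29 else 28)
  else 31

/-- A date is valid iff `1 ≤ m ≤ 12` and `1 ≤ d ≤ nbdays y m`. -/
def Date.valid (D : Date) : Prop :=
  1 ≤ D.m ∧ D.m ≤ 12 ∧ 1 ≤ D.d ∧ D.d ≤ nbdays D.y D.m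

/-- Month addition `(y, m, d) +m n`, with round-down of the day component. -/
def addMonths (D : Date) (n : ℤ) : Date :=
  ⟨D.y + (D.m - 1 + n) / 12,
   1 + (D.m - 1 + n) % 12,
   min D.d (nbdays (D.y + (D.m - 1 + n) / 12) (1 + (D.m - 1 + n) % 12))⟩

/-- A configuration of the small-step day-addition machine:
either a pending addition `D +D n`, or a finished date. -/
inductive Conf where
  | pending (D : Date) (n : ℤ)
  | done (D : Date)

/-- Small-step rules for day addition `+D`. -/
inductive Step : Conf → Conf → Prop where
  | add_days {y m d n : ℤ}
      (h1 : 1 ≤ d + n) (h2 : d + n ≤ nbdays y m) :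
      Step (Conf.pending ⟨y, m, d⟩ n) (Conf.done ⟨y, m, d + n⟩)
  | add_days_over {y m d n : ℤ}
      (h : d + n > nbdays y m) :
      Step (Conf.pending ⟨y, m, d⟩ n)
        (Conf.pending (addMonths ⟨y, m, 1⟩ 1) (n - (nbdays y m - d) - 1))
  | add_days_under1 {y m d n : ℤ}
      (h1 : 1 < d) (h2 : d + n ≤ 0) :
      Step (Conf.pending ⟨y, m, d⟩ n) (Conf.pending ⟨y, m, 1⟩ (d - 1 + n))
  | add_days_under2 {y m n y' m' : ℤ}
      (h1 : 1 + n ≤ 0) (h2 : addMonths ⟨y, m, 1⟩ (-1) = ⟨y', m', 1⟩) :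
      Step (Conf.pending ⟨y, m, 1⟩ n) (Conf.pending ⟨y', m', 1⟩ (n + nbdays y' m'))

/-- Reduction in finitely many steps. -/
def Reduces : Conf → Conf → Prop := Relation.ReflTransGen Step

instance : Nonempty Date := ⟨⟨2000, 3, 1⟩⟩

/-- `addDays D n` is the unique valid normal form of `D +D n`
(when it exists; arbitrary otherwise). -/
noncomputable def addDays (D : Date) (n : ℤ) : Date :=
  Classical.epsilon fun D' : Date =>
    D'.valid ∧ Reduces (Conf.pending D n) (Conf.done D')

/-- Date-period addition `D +P (ny, nm, nd) = (D +m (12·ny + nm)) +D nd`. -/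
noncomputable def addPeriod (D : Date) (P : ℤ × ℤ × ℤ) : Date :=
  addDays (addMonths D (12 * P.1 + P.2.1)) P.2.2

/-- Lexicographic order on dates. -/
def Date.le (a b : Date) : Prop :=
  a.y < b.y ∨ (a.y = b.y ∧ a.m < b.m) ∨ (a.y = b.y ∧ a.m = b.m ∧ a.d ≤ b.d)

/-- Strict lexicographic order on dates. -/
def Date.lt (a b : Date) : Prop :=
  a.y < b.y ∨ (a.y = b.y ∧ a.m < b.m) ∨ (a.y = b.y ∧ a.m = b.m ∧ a.d < b.d)

/-- The epoch date: March 1, 2000. -/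
def epoch : Date := ⟨2000, 3, 1⟩

/-- `toDelta D` is the unique integer `n` with `epoch +D n = D`
(when it exists; arbitrary otherwise). -/
noncomputable def toDelta (D : Date) : ℤ :=
  Classical.epsilon fun n : ℤ => addDays epoch n = D

/-!
Adding 18 months to March 31 lands in September, which has only 30 days, so the day is
clamped and the window ends exactly on the event date, while the elapsed-month count drops
to 17 because the event day is smaller than the base day. The day part of the period is 0,
and `+D 0` is the identity on valid dates because the small-step rules are deterministic,
so the normal form chosen by `addDays` is the one-step result.
-/

theorem nbdays_pos (y m : ℤ) : 0 < nbdays y m := by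
  unfold nbdays
  split_ifs <;> norm_num

theorem addMonths_valid {D : Date} (hd : 1 ≤ D.d) (n : ℤ) : (addMonths D n).valid := by
  refine ⟨?_, ?_, ?_, min_le_right _ _⟩ <;> simp only [addMonths]
  · have := Int.emod_nonneg (D.m - 1 + n) (by norm_num : (12 : ℤ) ≠ 0)
    omega
  · have := Int.emod_lt_of_pos (D.m - 1 + n) (by norm_num : (0 : ℤ) < 12)
    omega
  · have := nbdays_pos (D.y + (D.m - 1 + n) / 12) (1 + (D.m - 1 + n) % 12)
    omega

-- The four rules have pairwise exclusive side conditions.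
theorem Step.rightUnique : Relator.RightUnique Step := by
  intro c c₁ c₂ h₁ h₂
  cases h₁ with
  | add_days => cases h₂ <;> first | rfl | omega
  | @add_days_over y m => cases h₂ <;> first | rfl | linarith [nbdays_pos y m]
  | @add_days_under1 y m => cases h₂ <;> first | rfl | omega | linarith [nbdays_pos y m]
  | @add_days_under2 y m _ _ _ _ h =>
    cases h₂ with
    | add_days_under2 _ h' => rw [h] at h'; cases h'; rfl
    | _ => first | omega | linarith [nbdays_pos y m]

theorem Step.not_done (D : Date) (c : Conf) : ¬ Step (Conf.done D) c := nofun

theorem Reduces.done_unique {c : Conf} {D₁ D₂ : Date}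
    (h₁ : Reduces c (Conf.done D₁)) (h₂ : Reduces c (Conf.done D₂)) : D₁ = D₂ := by
  have from_done {D : Date} {c' : Conf} (h : Reduces (Conf.done D) c') : c' = Conf.done D :=
    (h.cases_head.resolve_right fun ⟨_, hstep, _⟩ => Step.not_done _ _ hstep).symm
  rcases Relation.ReflTransGen.total_of_right_unique Step.rightUnique h₁ h₂ with h | h
  · exact (Conf.done.inj (from_done h)).symm
  · exact Conf.done.inj (from_done h)

theorem addDays_eq_of_reduces {D D' : Date} {n : ℤ} (hD' : D'.valid)
    (h : Reduces (Conf.pending D n) (Conf.done D')) : addDays D n = D' :=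
  (Classical.epsilon_spec (p := fun D' : Date =>
    D'.valid ∧ Reduces (Conf.pending D n) (Conf.done D')) ⟨D', hD', h⟩).2.done_unique h

theorem addDays_zero {D : Date} (hD : D.valid) : addDays D 0 = D := by
  refine addDays_eq_of_reduces hD (.single ?_)
  obtain ⟨y, m, d⟩ := D
  obtain ⟨-, -, hd₁, hd₂⟩ : 1 ≤ m ∧ m ≤ 12 ∧ 1 ≤ d ∧ d ≤ nbdays y m := hD
  simpa using Step.add_days (y := y) (m := m) (n := 0) (by omega) (by omega)

theorem addPeriod_zero_days {D : Date} (hd : 1 ≤ D.d) (ny nm : ℤ) :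
    addPeriod D (ny, nm, 0) = addMonths D (12 * ny + nm) :=
  addDays_zero (addMonths_valid hd _)

/-- **The elapsed-months window test and the end-of-window test are not equivalent**:
for `base = (2025, 3, 31)` and `event = (2026, 9, 30)`, both valid with
`base ≤ event`, the day of `event` (30) is less than the day of `base` (31), the
adjusted elapsed-month count `12·(2026 − 2025) + (9 − 3) − 1 = 17` satisfies `17 < 18`,
yet `base +P (0, 18, 0) = (2026, 9, 30) = event`, so `event < base +P (0, 18, 0)` is
false. -/
theorem window_tests_not_equivalent :
    (Date.mk 2025 3 31).valid ∧ (Date.mk 2026 9 30).valid ∧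
    Date.le ⟨2025, 3, 31⟩ ⟨2026, 9, 30⟩ ∧
    (Date.mk 2026 9 30).d < (Date.mk 2025 3 31).d ∧
    (12 * ((2026 : ℤ) - 2025) + (9 - 3) - 1 = 17) ∧
    (17 : ℤ) < 18 ∧
    addPeriod ⟨2025, 3, 31⟩ (0, 18, 0) = ⟨2026, 9, 30⟩ ∧
    ¬ Date.lt ⟨2026, 9, 30⟩ (addPeriod ⟨2025, 3, 31⟩ (0, 18, 0)) := by
  have window_end : addPeriod ⟨2025, 3, 31⟩ (0, 18, 0) = ⟨2026, 9, 30⟩ := by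
    rw [addPeriod_zero_days (by norm_num)]
    simp [addMonths, nbdays]
  rw [window_end]
  simp [Date.valid, Date.le, Date.lt, nbdays]
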